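/- Let u and v be nonempty finite words over a totally ordered alphabet such that the infinite periodic words u^ω and v^ω are distinct. Then the first position at which u^ω and v^ω differ is at most |u| + |v| − gcd(|u|, |v|). -/
import Mathlib


variable {A : Type*} [LinearOrder A] [Inhabited A]

/-- The infinite periodic word `u^ω = uuu⋯`, as a function `ℕ → A`. -/
def omegaPow (u : List A) : ℕ → A := fun n => u.getD (n % u.length) default

/-- If `f` has period `d` on `[0, L)`, then `f i = f (i % d)` for `i < L`. -/
lemma modstep (f : ℕ → A) {d L : ℕ} (hd : 0 < d)
    (h : ∀ i, i + d < L → f (i + d) = f i) :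
    ∀ i, i < L → f i = f (i % d) := by
  intro i
  induction i using Nat.strong_induction_on with
  | _ i ih =>
    intro hi
    by_cases hcase : i < d
    · rw [Nat.mod_eq_of_lt hcase]
    · have hdi : d ≤ i := le_of_not_gt hcase
      have h1 : f i = f (i - d) := by
        have := h (i - d) (by omega)
        rw [Nat.sub_add_cancel hdi] at this
        exact this
      rw [h1, ih (i - d) (by omega) (by omega), Nat.mod_eq_sub_mod hdi]

/-- Inductive step for Fine–Wilf, in the case `n < m`. -/
lemma fw_step (f : ℕ → A) {m n : ℕ} (hn : 0 < n) (hlt : n < m)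
    (hpm : ∀ i, i + m < m + n - Nat.gcd m n → f (i + m) = f i)
    (hpn : ∀ i, i + n < m + n - Nat.gcd m n → f (i + n) = f i)
    (IH : ∀ m' n', m' + n' < m + n → 0 < m' → 0 < n' →
      (∀ i, i + m' < m' + n' - Nat.gcd m' n' → f (i + m') = f i) →
      (∀ i, i + n' < m' + n' - Nat.gcd m' n' → f (i + n') = f i) →
      ∀ i, i < m' + n' - Nat.gcd m' n' → f i = f (i % Nat.gcd m' n')) :
    ∀ i, i < m + n - Nat.gcd m n → f i = f (i % Nat.gcd m n) := by
  set d := Nat.gcd m n with hdd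
  have hdvm : d ∣ m := Nat.gcd_dvd_left m n
  have hdvn : d ∣ n := Nat.gcd_dvd_right m n
  have hdpos : 0 < d := Nat.gcd_pos_of_pos_right m hn
  have hdm : d ≤ m := Nat.le_of_dvd (by omega) hdvm
  have hdn : d ≤ n := Nat.le_of_dvd hn hdvn
  have hdvmn : d ∣ m - n := Nat.dvd_sub hdvm hdvn
  have hdmn : d ≤ m - n := Nat.le_of_dvd (by omega) hdvmn
  have e2 : Nat.gcd n (m - n) = d := by
    rw [hdd, Nat.gcd_comm m n]
    conv_rhs => rw [show m = (m - n) + n by omega, Nat.gcd_add_self_right]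
  -- apply IH with periods n and m - n
  have h1 : ∀ i, i < m - d → f i = f (i % d) := by
    intro i hi
    have hp1 : ∀ i, i + n < n + (m - n) - Nat.gcd n (m - n) → f (i + n) = f i := by
      intro j hj
      rw [e2] at hj
      exact hpn j (by omega)
    have hp2 : ∀ i, i + (m - n) < n + (m - n) - Nat.gcd n (m - n) → f (i + (m - n)) = f i := by
      intro j hj
      rw [e2] at hj
      calc f (j + (m - n)) = f (j + (m - n) + n) := (hpn _ (by omega)).symm
        _ = f (j + m) := by rw [show j + (m - n) + n = j + m by omega]
        _ = f j := hpm j (by omega)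
    have := IH n (m - n) (by omega) hn (by omega) hp1 hp2 i (by rw [e2]; omega)
    rwa [e2] at this
  -- extend to [0, m + n - d)
  intro i hi
  by_cases hcase : i < m - d
  · exact h1 i hcase
  · have hni : n ≤ i := by omega
    have hstep : f i = f (i - n) := by
      have := hpn (i - n) (by omega)
      rw [Nat.sub_add_cancel hni] at this
      exact this
    have hnd0 : n % d = 0 := Nat.eq_zero_of_dvd_of_lt hdvn |> fun _ => Nat.mod_eq_zero_of_dvd hdvn
    have emod : (i - n) % d = i % d := by
      conv_rhs => rw [show i = (i - n) + n by omega]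
      rw [Nat.add_mod, hnd0, Nat.add_zero, Nat.mod_mod_of_dvd _ dvd_rfl]
    rw [hstep, h1 (i - n) (by omega), emod]

/-- Fine–Wilf: if `f` has periods `m` and `n` on `[0, m + n - gcd m n)`, then
`f i = f (i % gcd m n)` on that range. -/
lemma fw (f : ℕ → A) : ∀ N m n, m + n ≤ N → 0 < m → 0 < n →
    (∀ i, i + m < m + n - Nat.gcd m n → f (i + m) = f i) →
    (∀ i, i + n < m + n - Nat.gcd m n → f (i + n) = f i) →
    ∀ i, i < m + n - Nat.gcd m n → f i = f (i % Nat.gcd m n) := by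
  intro N
  induction N with
  | zero => intro m n h hm hn; simp only [Nat.le_zero] at h; omega
  | succ N IHN =>
    intro m n hN hm hn hpm hpn
    have IH : ∀ m' n', m' + n' < m + n → 0 < m' → 0 < n' →
        (∀ i, i + m' < m' + n' - Nat.gcd m' n' → f (i + m') = f i) →
        (∀ i, i + n' < m' + n' - Nat.gcd m' n' → f (i + n') = f i) →
        ∀ i, i < m' + n' - Nat.gcd m' n' → f i = f (i % Nat.gcd m' n') := by
      intro m' n' hlt
      exact IHN m' n' (by omega)
    rcases lt_trichotomy m n with hlt | heq | hgt
    · -- symmetric case: swap m and n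
      have hpm' : ∀ i, i + n < n + m - Nat.gcd n m → f (i + n) = f i := by
        intro i hi
        rw [Nat.gcd_comm] at hi
        exact hpn i (by omega)
      have hpn' : ∀ i, i + m < n + m - Nat.gcd n m → f (i + m) = f i := by
        intro i hi
        rw [Nat.gcd_comm] at hi
        exact hpm i (by omega)
      have IH' : ∀ m' n', m' + n' < n + m → 0 < m' → 0 < n' →
          (∀ i, i + m' < m' + n' - Nat.gcd m' n' → f (i + m') = f i) →
          (∀ i, i + n' < m' + n' - Nat.gcd m' n' → f (i + n') = f i) →
          ∀ i, i < m' + n' - Nat.gcd m' n' → f i = f (i % Nat.gcd m' n') := by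
        intro m' n' hlt'
        exact IH m' n' (by omega)
      intro i hi
      have := fw_step f hm hlt hpm' hpn' IH' i (by rw [Nat.gcd_comm n m]; omega)
      rwa [Nat.gcd_comm n m] at this
    · subst heq
      intro i hi
      rw [Nat.gcd_self] at hi ⊢
      rw [Nat.mod_eq_of_lt (by omega)]
    · exact fw_step f hn hgt hpm hpn IH

lemma omegaPow_mod (u : List A) (i : ℕ) : omegaPow u i = omegaPow u (i % u.length) := by
  simp [omegaPow, Nat.mod_mod_of_dvd _ dvd_rfl]

lemma omegaPow_add_period (u : List A) (i : ℕ) : omegaPow u (i + u.length) = omegaPow u i := by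
  simp [omegaPow, Nat.add_mod_right]

/-- **Fine–Wilf bound on the first difference.**
If `u` and `v` are nonempty words with `u^ω ≠ v^ω`, then the first (1-indexed)
position at which `u^ω` and `v^ω` differ is at most `|u| + |v| - gcd(|u|, |v|)`.
Here `k` is the 0-indexed position, so the 1-indexed position is `k + 1`. -/
theorem first_difference_le_fine_wilf (u v : List A) (hu : u ≠ []) (hv : v ≠ [])
    (hne : omegaPow u ≠ omegaPow v) :
    ∃ k : ℕ, (∀ i < k, omegaPow u i = omegaPow v i) ∧ omegaPow u k ≠ omegaPow v k ∧
      k + 1 ≤ u.length + v.length - Nat.gcd u.length v.length := by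
  classical
  have hex : ∃ k, omegaPow u k ≠ omegaPow v k := by
    by_contra h
    push_neg at h
    exact hne (funext h)
  set m := u.length with hm
  set n := v.length with hn
  have hm0 : 0 < m := List.length_pos_iff.mpr hu
  have hn0 : 0 < n := List.length_pos_iff.mpr hv
  set d := Nat.gcd m n with hd
  have hdpos : 0 < d := Nat.gcd_pos_of_pos_right m hn0
  have hdm : d ≤ m := Nat.le_of_dvd hm0 (Nat.gcd_dvd_left m n)
  have hdn : d ≤ n := Nat.le_of_dvd hn0 (Nat.gcd_dvd_right m n)
  refine ⟨Nat.find hex, fun i hi => not_not.mp (Nat.find_min hex hi), Nat.find_spec hex, ?_⟩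
  by_contra hk
  push_neg at hk
  -- so all positions < m + n - d agree
  have hagree : ∀ i, i < m + n - d → omegaPow u i = omegaPow v i := by
    intro i hi
    exact not_not.mp (Nat.find_min hex (by omega))
  -- f = omegaPow u has periods m and n on the range
  have hfm : ∀ i, i + m < m + n - d → omegaPow u (i + m) = omegaPow u i :=
    fun i _ => omegaPow_add_period u i
  have hfn : ∀ i, i + n < m + n - d → omegaPow u (i + n) = omegaPow u i := by
    intro i hi
    rw [hagree (i + n) (by omega), omegaPow_add_period v i, ← hagree i (by omega)]
  have hgm : ∀ i, i + m < m + n - d → omegaPow v (i + m) = omegaPow v i := by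
    intro i hi
    rw [← hagree (i + m) (by omega), omegaPow_add_period u i, hagree i (by omega)]
  have hgn : ∀ i, i + n < m + n - d → omegaPow v (i + n) = omegaPow v i :=
    fun i _ => omegaPow_add_period v i
  have hf := fw (omegaPow u) (m + n) m n le_rfl hm0 hn0 hfm hfn
  have hg := fw (omegaPow v) (m + n) m n le_rfl hm0 hn0 hgm hgn
  apply hne
  funext i
  have hdvm : d ∣ m := Nat.gcd_dvd_left m n
  have h1 : omegaPow u i = omegaPow u (i % d) := by
    rw [omegaPow_mod u i, hf (i % m) (by have := Nat.mod_lt i hm0; omega),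
      Nat.mod_mod_of_dvd i hdvm]
  have h2 : omegaPow v i = omegaPow v (i % d) := by
    have hgper : omegaPow v i = omegaPow v (i % n) := omegaPow_mod v i
    rw [hgper, hg (i % n) (by have := Nat.mod_lt i hn0; omega),
      Nat.mod_mod_of_dvd i (Nat.gcd_dvd_right m n)]
  rw [h1, h2]
  exact hagree (i % d) (by have := Nat.mod_lt i hdpos; omega)
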